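/- arXiv:2210.09019 — 2 statements merged into one kernel-verified Lean document; each statement's English description precedes it below -/
import Mathlib

section
/- Under the reconstructed one-sample regression model, if the matrix E[u uᵀ] is positive definite, then γ = γ⁰ holds if and only if E[u·e] = 0. Hence the null hypothesis H₀ : γ = γ⁰ is equivalent to the moment condition E[(z − πᵀw)(v − wᵀθ)] = 0. -/
open MeasureTheory ProbabilityTheory Matrix

/-!
Write `d = γ - γ⁰`. Substituting `z = u + πᵀw` into `e = z ⬝ d + ε` gives
`e = u ⬝ d + w ⬝ (π d) + ε`. The residual `u` is orthogonal to `w` by the choice of `π`, and to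
`ε` because `u` is a function of `(z, w)`, which is independent of the centred `ε`. Hence
`E[u e] = E[u uᵀ] d = Q d`, which vanishes iff `d = 0` since the positive definite `Q` is
invertible.
-/

section MomentAlgebra

variable {Ω ι : Type*} [MeasurableSpace Ω] {μ : Measure Ω} [Fintype ι]
  {f : Ω → ℝ} {X : Ω → ι → ℝ}

theorem integrable_mul_dotProduct (hX : ∀ j, Integrable (fun ω => f ω * X ω j) μ) (c : ι → ℝ) :
    Integrable (fun ω => f ω * (X ω ⬝ᵥ c)) μ := by
  simp only [dotProduct, Finset.mul_sum, ← mul_assoc]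
  exact integrable_finsetSum _ fun j _ => (hX j).mul_const (c j)

theorem integral_mul_dotProduct (hX : ∀ j, Integrable (fun ω => f ω * X ω j) μ) (c : ι → ℝ) :
    ∫ ω, f ω * (X ω ⬝ᵥ c) ∂μ = (fun j => ∫ ω, f ω * X ω j ∂μ) ⬝ᵥ c := by
  simp only [dotProduct, Finset.mul_sum, ← mul_assoc]
  rw [integral_finsetSum _ fun j _ => (hX j).mul_const (c j)]
  simp only [integral_mul_const]

theorem integral_mul_dotProduct_add_dotProduct_add {κ : Type*} [Fintype κ] {W : Ω → κ → ℝ}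
    {ε : Ω → ℝ} (hX : ∀ j, Integrable (fun ω => f ω * X ω j) μ)
    (hW : ∀ l, Integrable (fun ω => f ω * W ω l) μ) (hε : Integrable (fun ω => f ω * ε ω) μ)
    (c : ι → ℝ) (b : κ → ℝ) :
    ∫ ω, f ω * (X ω ⬝ᵥ c + W ω ⬝ᵥ b + ε ω) ∂μ =
      (fun j => ∫ ω, f ω * X ω j ∂μ) ⬝ᵥ c + (fun l => ∫ ω, f ω * W ω l ∂μ) ⬝ᵥ b +
        ∫ ω, f ω * ε ω ∂μ := by
  have hXc := integrable_mul_dotProduct hX c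
  have hWb := integrable_mul_dotProduct hW b
  simp only [mul_add]
  rw [integral_add (hXc.fun_add hWb) hε, integral_add hXc hWb, integral_mul_dotProduct hX,
    integral_mul_dotProduct hW]

end MomentAlgebra

theorem dotProduct_eq_residual_add {ι κ : Type*} [Fintype ι] [Fintype κ] (z d : ι → ℝ)
    (w : κ → ℝ) (π : Matrix κ ι ℝ) :
    z ⬝ᵥ d = (z - πᵀ *ᵥ w) ⬝ᵥ d + w ⬝ᵥ (π *ᵥ d) := by
  rw [sub_dotProduct, dotProduct_mulVec, ← mulVec_transpose, sub_add_cancel]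

section Residual

variable {Ω ι κ : Type*} [MeasurableSpace Ω] {μ : Measure Ω} [Fintype κ]
  {z u : Ω → ι → ℝ} {w : Ω → κ → ℝ} {π : Matrix κ ι ℝ}

theorem integrable_residual_apply (hz : ∀ i, Integrable (fun ω => z ω i) μ)
    (hw : ∀ l, Integrable (fun ω => w ω l) μ) (hu : ∀ ω, u ω = z ω - πᵀ *ᵥ w ω) (i : ι) :
    Integrable (fun ω => u ω i) μ := by
  simp only [hu, Pi.sub_apply, mulVec, dotProduct, transpose_apply]
  exact (hz i).sub (integrable_finsetSum _ fun l _ => (hw l).const_mul _)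

theorem indepFun_residual_apply {ε : Ω → ℝ} (hzw : IndepFun (fun ω => (z ω, w ω)) ε μ)
    (hu : ∀ ω, u ω = z ω - πᵀ *ᵥ w ω) (i : ι) :
    IndepFun (fun ω => u ω i) ε μ := by
  have hmeas : Measurable fun p : (ι → ℝ) × (κ → ℝ) => p.1 i - (πᵀ *ᵥ p.2) i := by
    simp only [mulVec, dotProduct]
    fun_prop
  have hcomp : (fun ω => u ω i) = (fun p : (ι → ℝ) × (κ → ℝ) => p.1 i - (πᵀ *ᵥ p.2) i) ∘
      fun ω => (z ω, w ω) := funext fun ω => by simp [hu]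
  rw [hcomp]
  exact hzw.comp hmeas measurable_id

end Residual

theorem mulVec_sub_eq_zero_iff_of_posDef {n : Type*} [Fintype n] [DecidableEq n]
    {Q : Matrix n n ℝ} (hQ : Q.PosDef) {x y : n → ℝ} :
    Q *ᵥ (x - y) = 0 ↔ x = y := by
  rw [← sub_eq_zero (a := x)]
  exact (mulVec_injective_iff_isUnit.mpr hQ.isUnit).eq_iff' (mulVec_zero Q)

theorem stmt1_general {Ω : Type*} [MeasureSpace Ω] [IsProbabilityMeasure (ℙ : Measure Ω)]
    {k m : ℕ} (z : Ω → Fin k → ℝ) (w : Ω → Fin m → ℝ) (ε : Ω → ℝ)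
    (γ γ0 : Fin k → ℝ) (θ : Fin m → ℝ)
    (hz : ∀ i, MemLp (fun ω => z ω i) 2 ℙ)
    (hw : ∀ j, MemLp (fun ω => w ω j) 2 ℙ)
    (hε : Integrable ε ℙ)
    (hεzw : IndepFun (fun ω => (z ω, w ω)) ε ℙ)
    (hε0 : ∫ ω, ε ω = 0)
    (π : Matrix (Fin m) (Fin k) ℝ)
    (y v e : Ω → ℝ) (u : Ω → Fin k → ℝ)
    (hy : ∀ ω, y ω = (∑ i, z ω i * γ i) + (∑ j, w ω j * θ j) + ε ω)
    (hv : ∀ ω, v ω = y ω - ∑ i, z ω i * γ0 i)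
    (he : ∀ ω, e ω = v ω - ∑ j, w ω j * θ j)
    (hu : ∀ ω, u ω = z ω - π.transpose.mulVec (w ω))
    (hπ : ∀ i j, ∫ ω, u ω i * w ω j = 0)
    (huu : ∀ i j, Integrable (fun ω => u ω i * u ω j) ℙ)
    (huw : ∀ i j, Integrable (fun ω => u ω i * w ω j) ℙ)
    (Q : Matrix (Fin k) (Fin k) ℝ)
    (hQ : ∀ i j, Q i j = ∫ ω, u ω i * u ω j)
    (hQpd : Q.PosDef) :
    γ = γ0 ↔ ∀ i, ∫ ω, u ω i * e ω = 0 := by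
  set d := γ - γ0
  have he_decomp : ∀ ω, e ω = u ω ⬝ᵥ d + w ω ⬝ᵥ (π *ᵥ d) + ε ω := by
    intro ω
    rw [he, hv, hy, hu, ← dotProduct_eq_residual_add]
    simp only [d, dotProduct_sub]
    unfold dotProduct
    ring
  have hu_int := integrable_residual_apply (fun i => (hz i).integrable one_le_two)
    (fun l => (hw l).integrable one_le_two) hu
  have hu_indep := indepFun_residual_apply hεzw hu
  have hmoment : ∀ i, ∫ ω, u ω i * e ω = (Q *ᵥ d) i := by
    intro i
    have huε : ∫ ω, u ω i * ε ω = 0 := by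
      rw [(hu_indep i).integral_fun_mul_eq_mul_integral (hu_int i).aestronglyMeasurable
        hε.aestronglyMeasurable, hε0, mul_zero]
    simp only [he_decomp]
    rw [integral_mul_dotProduct_add_dotProduct_add (huu i) (huw i)
      ((hu_indep i).integrable_mul (hu_int i) hε), huε]
    simp [hπ, mulVec, hQ]
  rw [← mulVec_sub_eq_zero_iff_of_posDef hQpd, funext_iff]
  simp only [hmoment, Pi.zero_apply, d]

/-- Under the reconstructed one-sample regression model, if `E[u uᵀ]` is positive
definite, then `γ = γ⁰` iff `E[u·e] = 0`: the null hypothesis `H₀ : γ = γ⁰` is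
equivalent to the moment condition `E[(z − πᵀw)(v − wᵀθ)] = 0`. -/
theorem stmt1 {Ω : Type*} [MeasureSpace Ω] [IsProbabilityMeasure (ℙ : Measure Ω)]
    {k m : ℕ} (z : Ω → Fin k → ℝ) (w : Ω → Fin m → ℝ) (ε : Ω → ℝ)
    (γ γ0 : Fin k → ℝ) (θ : Fin m → ℝ)
    (hz : ∀ i, MemLp (fun ω => z ω i) 2 ℙ)
    (hw : ∀ j, MemLp (fun ω => w ω j) 2 ℙ)
    (hε : Integrable ε ℙ)
    (hεzw : IndepFun (fun ω => (z ω, w ω)) ε ℙ)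
    (hε0 : ∫ ω, ε ω = 0)
    (π : Matrix (Fin m) (Fin k) ℝ)
    (y v e : Ω → ℝ) (u : Ω → Fin k → ℝ)
    (hy : ∀ ω, y ω = (∑ i, z ω i * γ i) + (∑ j, w ω j * θ j) + ε ω)
    (hv : ∀ ω, v ω = y ω - ∑ i, z ω i * γ0 i)
    (he : ∀ ω, e ω = v ω - ∑ j, w ω j * θ j)
    (hu : ∀ ω, u ω = z ω - π.transpose.mulVec (w ω))
    (hπ : ∀ i j, ∫ ω, u ω i * w ω j = 0)
    (hue : ∀ i, Integrable (fun ω => u ω i * e ω) ℙ)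
    (huu : ∀ i j, Integrable (fun ω => u ω i * u ω j) ℙ)
    (huε : ∀ i, Integrable (fun ω => u ω i * ε ω) ℙ)
    (huz : ∀ i j, Integrable (fun ω => u ω i * z ω j) ℙ)
    (huw : ∀ i j, Integrable (fun ω => u ω i * w ω j) ℙ)
    (Q : Matrix (Fin k) (Fin k) ℝ)
    (hQ : ∀ i j, Q i j = ∫ ω, u ω i * u ω j)
    (hQpd : Q.PosDef) :
    γ = γ0 ↔ ∀ i, ∫ ω, u ω i * e ω = 0 :=
  stmt1_general z w ε γ γ0 θ hz hw hε hεzw hε0 π y v e u hy hv he hu hπ huu huw Q hQ hQpd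
end

section
/- Two-sample null equivalence: under the convolution regression model, if E[u* u*ᵀ] is positive definite, then γ* = 0 holds if and only if E[u*·(y − wᵀθ*)] = 0. Hence the homogeneity hypothesis H₀ : β_{A,G} = β_{B,G} (i.e. γ* = 0) is equivalent to the testable moment condition E[(z − π*ᵀw)(y − wᵀθ*)] = 0. -/
open MeasureTheory ProbabilityTheory

/-- Two-sample null equivalence: under the convolution regression model, if
`E[u* u*ᵀ]` is positive definite, then `γ* = 0` iff the moment vector
`E[(z − π*ᵀw)(y − wᵀθ*)]` vanishes: the homogeneity hypothesis
`H₀ : β_{A,G} = β_{B,G}` is equivalent to a testable moment condition. -/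
theorem stmt12 {Ω : Type*} [MeasureSpace Ω] [IsProbabilityMeasure (ℙ : Measure Ω)]
    {k p : ℕ} (z : Ω → Fin k → ℝ) (w : Ω → Fin (2 * p - k) → ℝ) (εs : Ω → ℝ)
    (γs : Fin k → ℝ) (θs : Fin (2 * p - k) → ℝ)
    (hz : ∀ i, MemLp (fun ω => z ω i) 2 ℙ)
    (hw : ∀ j, MemLp (fun ω => w ω j) 2 ℙ)
    (hεs : Integrable εs ℙ)
    (hεzw : IndepFun (fun ω => (z ω, w ω)) εs ℙ)
    (hε0 : ∫ ω, εs ω = 0)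
    (y : Ω → ℝ)
    (hy : ∀ ω, y ω = (∑ i, z ω i * γs i) + (∑ j, w ω j * θs j) + εs ω)
    (πs : Matrix (Fin (2 * p - k)) (Fin k) ℝ)
    (us : Ω → Fin k → ℝ)
    (hus : ∀ ω, us ω = z ω - πs.transpose.mulVec (w ω))
    (hπs : ∀ i j, ∫ ω, us ω i * w ω j = 0)
    (hue : ∀ i, Integrable (fun ω => us ω i * (y ω - ∑ j, w ω j * θs j)) ℙ)
    (huu : ∀ i j, Integrable (fun ω => us ω i * us ω j) ℙ)
    (huε : ∀ i, Integrable (fun ω => us ω i * εs ω) ℙ)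
    (huz : ∀ i j, Integrable (fun ω => us ω i * z ω j) ℙ)
    (huw : ∀ i j, Integrable (fun ω => us ω i * w ω j) ℙ)
    (Q : Matrix (Fin k) (Fin k) ℝ)
    (hQ : ∀ i j, Q i j = ∫ ω, us ω i * us ω j)
    (hQpd : Q.PosDef) :
    γs = 0 ↔ ∀ i, ∫ ω, us ω i * (y ω - ∑ j, w ω j * θs j) = 0 := by
  -- u_i is independent of ε and has mean-zero product with ε
  have husmeas : ∀ i, AEStronglyMeasurable (fun ω => us ω i) ℙ := by
    intro i
    have : (fun ω => us ω i)
        = fun ω => z ω i - ∑ l, πs l i * w ω l := by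
      funext ω
      simp [hus ω, Matrix.mulVec, Matrix.transpose, dotProduct]
    rw [this]
    exact ((hz i).aestronglyMeasurable.sub
      (Finset.aestronglyMeasurable_fun_sum _ fun l _ =>
        ((hw l).aestronglyMeasurable.const_mul _)))
  have huεzero : ∀ i, ∫ ω, us ω i * εs ω = 0 := by
    intro i
    have hφ : Measurable (fun q : (Fin k → ℝ) × (Fin (2 * p - k) → ℝ) =>
        q.1 i - ∑ l, πs l i * q.2 l) := by
      apply Measurable.sub
      · exact (measurable_pi_apply i).comp measurable_fst
      · exact Finset.measurable_sum _ fun l _ =>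
          ((measurable_pi_apply l).comp measurable_snd).const_mul _
    have hind : IndepFun (fun ω => us ω i) εs ℙ := by
      have := hεzw.comp hφ measurable_id
      convert this using 1
      funext ω
      simp [hus ω, Matrix.mulVec, Matrix.transpose, dotProduct]
      rfl
    rw [IndepFun.integral_fun_mul_eq_mul_integral hind (husmeas i) hεs.aestronglyMeasurable, hε0, mul_zero]
  -- E[u_i z_j] = Q i j
  have huzQ : ∀ i j, ∫ ω, us ω i * z ω j = Q i j := by
    intro i j
    have hzexp : ∀ ω, z ω j = us ω j + ∑ l, πs l j * w ω l := by
      intro ω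
      simp [hus ω, Matrix.mulVec, Matrix.transpose, dotProduct]
    have : (fun ω => us ω i * z ω j)
        = fun ω => us ω i * us ω j + ∑ l, πs l j * (us ω i * w ω l) := by
      funext ω
      rw [hzexp ω, mul_add, Finset.mul_sum]
      congr 1
      exact Finset.sum_congr rfl fun l _ => by ring
    rw [this, integral_add (huu i j)
      (integrable_finset_sum _ fun l _ => (huw i l).const_mul _),
      integral_finset_sum _ fun l _ => (huw i l).const_mul _]
    simp only [integral_const_mul, hπs, mul_zero, Finset.sum_const_zero, add_zero]
    exact (hQ i j).symm
  -- the moment vector equals Q *ᵥ γs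
  have hmom : ∀ i, ∫ ω, us ω i * (y ω - ∑ j, w ω j * θs j)
      = (Q.mulVec γs) i := by
    intro i
    have heq : (fun ω => us ω i * (y ω - ∑ j, w ω j * θs j))
        = fun ω => (∑ j, γs j * (us ω i * z ω j)) + us ω i * εs ω := by
      funext ω
      have h1 : (∑ i, z ω i * γs i) + (∑ j, w ω j * θs j) + εs ω
          - ∑ j, w ω j * θs j = (∑ i, z ω i * γs i) + εs ω := by ring
      rw [hy ω, h1, mul_add, Finset.mul_sum]
      congr 1
      exact Finset.sum_congr rfl fun j _ => by ring
    rw [heq, integral_add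
      (integrable_finset_sum _ fun j _ => (huz i j).const_mul _) (huε i),
      integral_finset_sum _ fun j _ => (huz i j).const_mul _, huεzero i, add_zero]
    simp only [integral_const_mul, huzQ]
    simp only [Matrix.mulVec, dotProduct]
    exact Finset.sum_congr rfl fun j _ => by ring
  constructor
  · intro hγ i
    rw [hmom i, hγ]
    simp
  · intro hmomz
    have hQγ : Q.mulVec γs = 0 := by
      funext i
      rw [← hmom i, hmomz i]
      rfl
    by_contra hne
    have := hQpd.dotProduct_mulVec_pos hne
    rw [hQγ] at this
    simp at this
end
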